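/- arXiv:0808.0414 — 3 statements merged into one kernel-verified Lean document; each statement's English description precedes it below -/
import Mathlib

section
/- If Φ : R^n → R is positively homogeneous of degree q ≥ 1 and Lipschitz on the unit sphere S^{n-1}, then there exists a constant C_Φ such that |Φ(a+b) − Φ(a)| ≤ C_Φ (|a|^{q-1}|b| + |b|^q) for all a, b ∈ R^n. -/
set_option maxHeartbeats 1000000

open Real

lemma aux_rpow_diff {q : ℝ} (hq : 1 ≤ q) {r s : ℝ} (hr : 0 ≤ r) (hrs : r ≤ s) :
    s ^ q - r ^ q ≤ q * s ^ (q - 1) * (s - r) := by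
  have hq0 : (0:ℝ) ≤ q := by linarith
  rcases eq_or_lt_of_le hrs with h | h
  · rw [h]; simp
  · obtain ⟨c, hc, hc'⟩ := exists_hasDerivAt_eq_slope (fun x => x ^ q)
      (fun x => q * x ^ (q - 1)) h
      (fun x _ => (Real.continuousAt_rpow_const x q (Or.inr hq0)).continuousWithinAt)
      (fun x _ => Real.hasDerivAt_rpow_const (Or.inr hq))
    have hsr : s - r ≠ 0 := sub_ne_zero.mpr h.ne'
    rw [eq_div_iff hsr] at hc'
    rw [← hc']
    have hcs : c ^ (q - 1) ≤ s ^ (q - 1) :=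
      Real.rpow_le_rpow (le_trans hr hc.1.le) hc.2.le (by linarith)
    have h1 : 0 ≤ s - r := by linarith
    gcongr

lemma aux_abs_rpow_diff {q r s β : ℝ} (hq : 1 ≤ q) (hr : 0 ≤ r) (hs : 0 ≤ s) (hβ : 0 ≤ β)
    (h1 : s ≤ r + β) (h2 : |s - r| ≤ β) :
    |s ^ q - r ^ q| ≤ q * (r + β) ^ (q - 1) * β := by
  have hq0 : (0:ℝ) ≤ q - 1 := by linarith
  have hq0' : (0:ℝ) ≤ q := by linarith
  rcases le_total r s with h | h
  · rw [abs_of_nonneg (by linarith [Real.rpow_le_rpow hr h hq0'])]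
    have h3 : s - r ≤ β := by rw [abs_of_nonneg (by linarith)] at h2; linarith
    have h4 : 0 ≤ s - r := by linarith
    calc s ^ q - r ^ q ≤ q * s ^ (q - 1) * (s - r) := aux_rpow_diff hq hr h
    _ ≤ q * (r + β) ^ (q - 1) * β := by
        have h5 : s ^ (q - 1) ≤ (r + β) ^ (q - 1) := Real.rpow_le_rpow hs h1 hq0
        gcongr
  · rw [abs_of_nonpos (by linarith [Real.rpow_le_rpow hs h hq0'])]
    have h3 : r - s ≤ β := by rw [abs_of_nonpos (by linarith)] at h2; linarith
    have h4 : 0 ≤ r - s := by linarith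
    calc -(s ^ q - r ^ q) = r ^ q - s ^ q := by ring
    _ ≤ q * r ^ (q - 1) * (r - s) := aux_rpow_diff hq hs h
    _ ≤ q * (r + β) ^ (q - 1) * β := by
        have h5 : r ^ (q - 1) ≤ (r + β) ^ (q - 1) :=
          Real.rpow_le_rpow hr (by linarith) hq0
        gcongr

lemma aux_split {q r β : ℝ} (hq : 1 ≤ q) (hr : 0 ≤ r) (hβ : 0 ≤ β) :
    (r + β) ^ (q - 1) ≤ 2 ^ (q - 1) * (r ^ (q - 1) + β ^ (q - 1)) := by
  have hq0 : (0:ℝ) ≤ q - 1 := by linarith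
  have h1 : r + β ≤ 2 * max r β := by
    rcases le_total r β with h | h
    · rw [max_eq_right h]; linarith
    · rw [max_eq_left h]; linarith
  calc (r + β) ^ (q - 1) ≤ (2 * max r β) ^ (q - 1) :=
        Real.rpow_le_rpow (by linarith) h1 hq0
  _ = 2 ^ (q - 1) * (max r β) ^ (q - 1) := Real.mul_rpow (by norm_num) (le_max_of_le_left hr)
  _ ≤ 2 ^ (q - 1) * (r ^ (q - 1) + β ^ (q - 1)) := by
      have h2 : (max r β) ^ (q - 1) ≤ r ^ (q - 1) + β ^ (q - 1) := by
        rcases max_cases r β with ⟨h3, _⟩ | ⟨h3, _⟩ <;> rw [h3]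
        · linarith [Real.rpow_nonneg hβ (q - 1)]
        · linarith [Real.rpow_nonneg hr (q - 1)]
      have h6 : (0:ℝ) ≤ (2:ℝ) ^ (q - 1) := Real.rpow_nonneg (by norm_num) (q - 1)
      nlinarith


/-- If `Φ : ℝⁿ → ℝ` is positively homogeneous of degree `q ≥ 1` and Lipschitz on the unit
sphere, then `|Φ(a+b) − Φ(a)| ≤ C_Φ (|a|^{q-1}|b| + |b|^q)` for some constant `C_Φ`. -/
theorem stmt_1 (n : ℕ) (q : ℝ) (hq : 1 ≤ q)
    (Φ : EuclideanSpace ℝ (Fin n) → ℝ)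
    (hhom : ∀ t : ℝ, 0 < t → ∀ x, Φ (t • x) = t ^ q * Φ x)
    (hlip : ∃ L : NNReal, LipschitzOnWith L Φ (Metric.sphere (0 : EuclideanSpace ℝ (Fin n)) 1)) :
    ∃ C : ℝ, 0 < C ∧ ∀ a b : EuclideanSpace ℝ (Fin n),
      |Φ (a + b) - Φ a| ≤ C * (‖a‖ ^ (q - 1) * ‖b‖ + ‖b‖ ^ q) := by
  obtain ⟨L, hL⟩ := hlip
  have hq0 : (0:ℝ) < q := by linarith
  -- Φ 0 = 0
  have hΦ0 : Φ 0 = 0 := by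
    have h2 := hhom 2 (by norm_num) 0
    rw [smul_zero] at h2
    have h2q : (2:ℝ) ≤ 2 ^ q := by
      nth_rewrite 1 [show (2:ℝ) = 2 ^ (1:ℝ) by norm_num]
      exact Real.rpow_le_rpow_left_iff (by norm_num) |>.mpr hq
    nlinarith [h2]
  -- bound on sphere
  obtain ⟨M, hM⟩ := (isCompact_sphere (0 : EuclideanSpace ℝ (Fin n)) 1).exists_bound_of_continuousOn hL.continuousOn
  set M' : ℝ := max M 0 with hM'def
  have hM'0 : 0 ≤ M' := le_max_right _ _
  have hMs : ∀ x ∈ Metric.sphere (0 : EuclideanSpace ℝ (Fin n)) 1, |Φ x| ≤ M' := by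
    intro x hx
    exact le_trans (by simpa [Real.norm_eq_abs] using hM x hx) (le_max_left _ _)
  -- membership of normalized vectors
  have hmem : ∀ x : EuclideanSpace ℝ (Fin n), x ≠ 0 →
      ‖x‖⁻¹ • x ∈ Metric.sphere (0 : EuclideanSpace ℝ (Fin n)) 1 := by
    intro x hx
    have hxn : ‖x‖ ≠ 0 := norm_ne_zero_iff.mpr hx
    rw [mem_sphere_zero_iff_norm, norm_smul, norm_inv, norm_norm, inv_mul_cancel₀ hxn]
  -- scaling formula
  have hscale : ∀ x : EuclideanSpace ℝ (Fin n), x ≠ 0 →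
      Φ x = ‖x‖ ^ q * Φ (‖x‖⁻¹ • x) := by
    intro x hx
    have hxn : (0:ℝ) < ‖x‖ := norm_pos_iff.mpr hx
    have := hhom ‖x‖⁻¹ (by positivity) x
    rw [this, Real.inv_rpow hxn.le]
    have : (0:ℝ) < ‖x‖ ^ q := Real.rpow_pos_of_pos hxn q
    field_simp
  -- global bound
  have hbound : ∀ x : EuclideanSpace ℝ (Fin n), |Φ x| ≤ M' * ‖x‖ ^ q := by
    intro x
    by_cases hx : x = 0
    · simp [hx, hΦ0, Real.zero_rpow hq0.ne']
    · rw [hscale x hx, abs_mul, abs_of_nonneg (Real.rpow_nonneg (norm_nonneg _) q)]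
      have h1 := hMs _ (hmem x hx)
      have h2 : (0:ℝ) ≤ ‖x‖ ^ q := Real.rpow_nonneg (norm_nonneg _) q
      nlinarith
  refine ⟨M' * q * 2 ^ (q - 1) + 2 * L + M' + 1, by positivity, fun a b => ?_⟩
  set C := M' * q * 2 ^ (q - 1) + 2 * L + M' + 1 with hCdef
  have hC0 : 0 < C := by positivity
  set r : ℝ := ‖a‖ with hrdef
  set β : ℝ := ‖b‖ with hβdef
  set s : ℝ := ‖a + b‖ with hsdef
  have hr0 : 0 ≤ r := norm_nonneg _
  have hβ0 : 0 ≤ β := norm_nonneg _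
  have hs0 : 0 ≤ s := norm_nonneg _
  have hrhs0 : 0 ≤ r ^ (q - 1) * β + β ^ q := by
    have := Real.rpow_nonneg hr0 (q - 1)
    have := Real.rpow_nonneg hβ0 q
    positivity
  by_cases hb : b = 0
  · simp only [hb, add_zero, sub_self, abs_zero]
    exact mul_nonneg hC0.le hrhs0
  have hβpos : 0 < β := norm_pos_iff.mpr hb
  by_cases ha : a = 0
  · have h1 := hbound b
    have h2 : |Φ (a + b) - Φ a| = |Φ b| := by rw [ha, hΦ0, zero_add, sub_zero]
    rw [h2]
    have h3 : (0:ℝ) ≤ r ^ (q - 1) * β := by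
      have := Real.rpow_nonneg hr0 (q - 1); positivity
    have h4 : M' * β ^ q ≤ C * β ^ q := by
      have := Real.rpow_nonneg hβ0 q
      have hMC : M' ≤ C := by
        have h5 : (0:ℝ) ≤ M' * q * 2 ^ (q - 1) := by positivity
        have := L.coe_nonneg
        rw [hCdef]; linarith
      nlinarith
    nlinarith
  have hrpos : 0 < r := norm_pos_iff.mpr ha
  have hMC : M' ≤ C := by
    have h5 : (0:ℝ) ≤ M' * q * 2 ^ (q - 1) := by positivity
    have := L.coe_nonneg
    rw [hCdef]; linarith
  by_cases hab : a + b = 0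
  · have hra : a = -b := eq_neg_of_add_eq_zero_left hab
    have hrβ : r = β := by rw [hrdef, hβdef, hra, norm_neg]
    have h1 := hbound a
    have h2 : r ^ (q - 1) * β = r ^ q := by
      rw [Real.rpow_sub_one hrpos.ne' q, ← hrβ]
      exact div_mul_cancel₀ _ hrpos.ne'
    have h3 : |Φ (a + b) - Φ a| = |Φ a| := by rw [hab, hΦ0, zero_sub, abs_neg]
    rw [h3]
    have h4 : (0:ℝ) ≤ β ^ q := Real.rpow_nonneg hβ0 q
    have h5 : (0:ℝ) ≤ r ^ q := Real.rpow_nonneg hr0 q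
    nlinarith
  have hspos : 0 < s := norm_pos_iff.mpr hab
  set u : EuclideanSpace ℝ (Fin n) := s⁻¹ • (a + b) with hudef
  set v : EuclideanSpace ℝ (Fin n) := r⁻¹ • a with hvdef
  have hu : u ∈ Metric.sphere (0 : EuclideanSpace ℝ (Fin n)) 1 := hmem _ hab
  have hv : v ∈ Metric.sphere (0 : EuclideanSpace ℝ (Fin n)) 1 := hmem _ ha
  have key : Φ (a + b) - Φ a = (s ^ q - r ^ q) * Φ u + r ^ q * (Φ u - Φ v) := by
    rw [hscale (a + b) hab, hscale a ha, ← hsdef, ← hrdef, ← hudef, ← hvdef]; ring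
  have hrq0 : (0:ℝ) ≤ r ^ q := Real.rpow_nonneg hr0 q
  have step1 : |Φ (a + b) - Φ a| ≤ |s ^ q - r ^ q| * |Φ u| + r ^ q * |Φ u - Φ v| := by
    rw [key]
    calc |(s ^ q - r ^ q) * Φ u + r ^ q * (Φ u - Φ v)|
        ≤ |(s ^ q - r ^ q) * Φ u| + |r ^ q * (Φ u - Φ v)| := abs_add_le _ _
      _ = |s ^ q - r ^ q| * |Φ u| + r ^ q * |Φ u - Φ v| := by
          rw [abs_mul, abs_mul, abs_of_nonneg hrq0]
  have hΦu : |Φ u| ≤ M' := hMs _ hu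
  have hlipuv : |Φ u - Φ v| ≤ (L : ℝ) * ‖u - v‖ := by
    have := hL.dist_le_mul u hu v hv
    rwa [Real.dist_eq, dist_eq_norm] at this
  -- norm of difference of unit vectors
  have hsr : |s - r| ≤ β := by
    have h := abs_norm_sub_norm_le (a + b) a
    rw [add_sub_cancel_left] at h
    exact h
  have huv : ‖u - v‖ ≤ 2 * β / r := by
    have hue : u - v = r⁻¹ • b + (s⁻¹ - r⁻¹) • (a + b) := by
      rw [hudef, hvdef]; module
    have h1 : ‖u - v‖ ≤ ‖r⁻¹ • b‖ + ‖(s⁻¹ - r⁻¹) • (a + b)‖ := by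
      rw [hue]; exact norm_add_le _ _
    have h2 : ‖r⁻¹ • b‖ = r⁻¹ * β := by
      rw [norm_smul, Real.norm_eq_abs, abs_of_nonneg (inv_nonneg.mpr hr0)]
    have h3 : ‖(s⁻¹ - r⁻¹) • (a + b)‖ = |s⁻¹ - r⁻¹| * s := by
      rw [norm_smul, Real.norm_eq_abs]
    have h4 : |s⁻¹ - r⁻¹| * s ≤ β / r := by
      rw [inv_sub_inv hspos.ne' hrpos.ne', abs_div,
        abs_of_nonneg (by positivity : (0:ℝ) ≤ s * r)]
      rw [div_mul_eq_mul_div, div_le_div_iff₀ (by positivity) hrpos]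
      have h5 : |r - s| ≤ β := by rw [abs_sub_comm]; exact hsr
      nlinarith [mul_le_mul_of_nonneg_right h5 (mul_pos hspos hrpos).le]
    calc ‖u - v‖ ≤ r⁻¹ * β + |s⁻¹ - r⁻¹| * s := by rw [← h2, ← h3]; exact h1
      _ ≤ r⁻¹ * β + β / r := by linarith
      _ = 2 * β / r := by ring
  -- piece bounds
  have hr1 : r ^ (q - 1) = r ^ q / r := Real.rpow_sub_one hrpos.ne' q
  have hβ1 : β ^ (q - 1) = β ^ q / β := Real.rpow_sub_one hβpos.ne' q
  have piece2 : r ^ q * |Φ u - Φ v| ≤ 2 * L * (r ^ (q - 1) * β) := by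
    calc r ^ q * |Φ u - Φ v| ≤ r ^ q * ((L : ℝ) * (2 * β / r)) := by
          have h6 : (L : ℝ) * ‖u - v‖ ≤ (L : ℝ) * (2 * β / r) :=
            mul_le_mul_of_nonneg_left huv L.coe_nonneg
          have h7 : |Φ u - Φ v| ≤ (L : ℝ) * (2 * β / r) := le_trans hlipuv h6
          exact mul_le_mul_of_nonneg_left h7 hrq0
      _ = 2 * L * (r ^ (q - 1) * β) := by rw [hr1]; ring
  have piece1 : |s ^ q - r ^ q| * |Φ u| ≤ M' * (q * (r + β) ^ (q - 1) * β) := by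
    have h8 : |s ^ q - r ^ q| ≤ q * (r + β) ^ (q - 1) * β :=
      aux_abs_rpow_diff hq hr0 hs0 hβ0 (norm_add_le a b) hsr
    have h9 : (0:ℝ) ≤ q * (r + β) ^ (q - 1) * β := by
      have := Real.rpow_nonneg (by linarith : (0:ℝ) ≤ r + β) (q - 1)
      positivity
    calc |s ^ q - r ^ q| * |Φ u| ≤ (q * (r + β) ^ (q - 1) * β) * M' :=
          mul_le_mul h8 hΦu (abs_nonneg _) h9
      _ = M' * (q * (r + β) ^ (q - 1) * β) := by ring
  -- combine
  have hsplit := aux_split hq hr0 hβ0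
  have hT2 : (0:ℝ) ≤ (2:ℝ) ^ (q - 1) := Real.rpow_nonneg (by norm_num) (q - 1)
  have hR1 : (0:ℝ) ≤ r ^ (q - 1) := Real.rpow_nonneg hr0 (q - 1)
  have hB1 : (0:ℝ) ≤ β ^ (q - 1) := Real.rpow_nonneg hβ0 (q - 1)
  have hβq : β ^ (q - 1) * β = β ^ q := by rw [hβ1, div_mul_cancel₀ _ hβpos.ne']
  have final1 : M' * (q * (r + β) ^ (q - 1) * β)
      ≤ M' * q * 2 ^ (q - 1) * (r ^ (q - 1) * β + β ^ q) := by
    have h10 : q * (r + β) ^ (q - 1) * β ≤ q * (2 ^ (q - 1) * (r ^ (q - 1) + β ^ (q - 1))) * β := by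
      exact mul_le_mul_of_nonneg_right (mul_le_mul_of_nonneg_left hsplit hq0.le) hβ0
    calc M' * (q * (r + β) ^ (q - 1) * β)
        ≤ M' * (q * (2 ^ (q - 1) * (r ^ (q - 1) + β ^ (q - 1))) * β) :=
          mul_le_mul_of_nonneg_left h10 hM'0
      _ = M' * q * 2 ^ (q - 1) * (r ^ (q - 1) * β + β ^ (q - 1) * β) := by ring
      _ = M' * q * 2 ^ (q - 1) * (r ^ (q - 1) * β + β ^ q) := by rw [hβq]
  have hL0 := L.coe_nonneg
  have hβq0 : (0:ℝ) ≤ β ^ q := Real.rpow_nonneg hβ0 q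
  calc |Φ (a + b) - Φ a| ≤ |s ^ q - r ^ q| * |Φ u| + r ^ q * |Φ u - Φ v| := step1
    _ ≤ M' * q * 2 ^ (q - 1) * (r ^ (q - 1) * β + β ^ q) + 2 * L * (r ^ (q - 1) * β) := by
        linarith [le_trans piece1 final1, piece2]
    _ ≤ C * (r ^ (q - 1) * β + β ^ q) := by
        rw [hCdef]
        have h11 : (0:ℝ) ≤ r ^ (q - 1) * β := by positivity
        nlinarith
end

section
/- For n ≥ 2, 1 ≤ q < n/(n-1), and f ∈ L^1(R^n), define A_3(x) = ∫_{|y| > 2|x|} |f(y)| |y|^{1-n} dy. Then (∫_{R^n} A_3(x)^q |x|^{n(q-1)-q} dx)^{1/q} ≤ c(n,q) ‖f‖_{L^1}. -/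
/-!
Spending `q - 1` of the `q` factors of `A(x)` on the trivial bound `A(x) ≤ (2|x|)^{1-n} ‖f‖₁`
makes the exponents of `|x|` collapse: `A(x)^q |x|^{n(q-1)-q} ≤ C ‖f‖₁^{q-1} |x|^{-1} A(x)`.
By Tonelli, `∫ |x|^{-1} A(x) dx = ∫ |f(y)| |y|^{1-n} (∫_{|x|<|y|/2} |x|^{-1} dx) dy`, and by
scaling the inner integral is `κ (|y|/2)^{n-1}` with `κ = ∫_{|x|<1} |x|^{-1} dx`, finite as `n ≥ 2`.
-/

open MeasureTheory Metric Set Module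
open scoped ENNReal

theorem rpow_mul_rpow_le_of_le {A t I d q : ℝ} (hA : 0 ≤ A) (ht : 0 < t) (hq : 1 ≤ q)
    (hAI : A ≤ (2 * t) ^ (1 - d) * I) :
    A ^ q * t ^ (d * (q - 1) - q) ≤
      2 ^ ((1 - d) * (q - 1)) * I ^ (q - 1) * (t ^ (-1 : ℝ) * A) := by
  have hI : 0 ≤ I := nonneg_of_mul_nonneg_right (hA.trans hAI) (by positivity)
  have hAq : A ^ q = A ^ (q - 1) * A := by
    rw [← Real.rpow_add_one' hA (by linarith)]; ring_nf
  have hpow : A ^ (q - 1) ≤ 2 ^ ((1 - d) * (q - 1)) * t ^ ((1 - d) * (q - 1)) * I ^ (q - 1) := by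
    calc A ^ (q - 1) ≤ ((2 * t) ^ (1 - d) * I) ^ (q - 1) :=
          Real.rpow_le_rpow hA hAI (by linarith)
      _ = _ := by
          rw [Real.mul_rpow (by positivity) hI, ← Real.rpow_mul (by positivity),
            Real.mul_rpow zero_le_two ht.le]
  have ht_exp : t ^ ((1 - d) * (q - 1)) * t ^ (d * (q - 1) - q) = t ^ (-1 : ℝ) := by
    rw [← Real.rpow_add ht]; ring_nf
  calc A ^ q * t ^ (d * (q - 1) - q) = A ^ (q - 1) * t ^ (d * (q - 1) - q) * A := by
        rw [hAq]; ring
    _ ≤ 2 ^ ((1 - d) * (q - 1)) * t ^ ((1 - d) * (q - 1)) * I ^ (q - 1) *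
          t ^ (d * (q - 1) - q) * A := by gcongr
    _ = _ := by rw [← ht_exp]; ring

section NormedGroup

variable {E : Type*} [NormedAddCommGroup E] [MeasurableSpace E] [OpensMeasurableSpace E]
  {μ : Measure E}

theorem setIntegral_two_norm_lt_le {f : E → ℝ} (hf : Integrable f μ) {d : ℝ} (hd : 1 ≤ d)
    {x : E} (hx : x ≠ 0) :
    ∫ y in {y | 2 * ‖x‖ < ‖y‖}, |f y| * ‖y‖ ^ (1 - d) ∂μ ≤
      (2 * ‖x‖) ^ (1 - d) * ∫ y, |f y| ∂μ := by
  have hS : MeasurableSet {y : E | 2 * ‖x‖ < ‖y‖} :=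
    measurableSet_lt measurable_const measurable_norm
  calc ∫ y in {y | 2 * ‖x‖ < ‖y‖}, |f y| * ‖y‖ ^ (1 - d) ∂μ
      ≤ ∫ y in {y | 2 * ‖x‖ < ‖y‖}, (2 * ‖x‖) ^ (1 - d) * |f y| ∂μ := by
        refine integral_mono_of_nonneg (.of_forall fun y => by positivity)
          (hf.abs.const_mul _).restrict ?_
        filter_upwards [ae_restrict_mem hS] with y (hy : 2 * ‖x‖ < ‖y‖)
        have h2x : 0 < 2 * ‖x‖ := by positivity
        rw [mul_comm]
        exact mul_le_mul_of_nonneg_right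
          (Real.rpow_le_rpow_of_nonpos h2x hy.le (by linarith)) (abs_nonneg _)
    _ = (2 * ‖x‖) ^ (1 - d) * ∫ y in {y | 2 * ‖x‖ < ‖y‖}, |f y| ∂μ := integral_const_mul _ _
    _ ≤ (2 * ‖x‖) ^ (1 - d) * ∫ y, |f y| ∂μ :=
        mul_le_mul_of_nonneg_left
          (setIntegral_le_integral hf.abs (.of_forall fun y => abs_nonneg _)) (by positivity)

theorem lintegral_mul_setLIntegral_two_norm_lt_swap [SFinite μ] {h g : E → ℝ≥0∞}
    (hh : Measurable h) (hg : AEMeasurable g μ) :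
    ∫⁻ x, h x * ∫⁻ y in {y | 2 * ‖x‖ < ‖y‖}, g y ∂μ ∂μ =
      ∫⁻ y, g y * ∫⁻ x in ball 0 (‖y‖ / 2), h x ∂μ ∂μ := by
  set T : Set (E × E) := {p | 2 * ‖p.1‖ < ‖p.2‖}
  have hT : MeasurableSet T :=
    measurableSet_lt (measurable_const.mul measurable_fst.norm) measurable_snd.norm
  have hS (x : E) : MeasurableSet {y : E | 2 * ‖x‖ < ‖y‖} :=
    measurableSet_lt measurable_const measurable_norm
  have hTx (x y : E) :
      h x * {y | 2 * ‖x‖ < ‖y‖}.indicator g y = T.indicator (fun p => h p.1 * g p.2) (x, y) := by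
    by_cases hxy : 2 * ‖x‖ < ‖y‖ <;> simp [T, indicator, hxy]
  have hTy (x y : E) :
      g y * (ball 0 (‖y‖ / 2)).indicator h x = T.indicator (fun p => h p.1 * g p.2) (x, y) := by
    have : x ∈ ball (0 : E) (‖y‖ / 2) ↔ 2 * ‖x‖ < ‖y‖ := by
      rw [mem_ball_zero_iff]; constructor <;> intro <;> linarith
    by_cases hxy : 2 * ‖x‖ < ‖y‖ <;> simp [T, indicator, this, mul_comm]
  have hF : AEMeasurable (Function.uncurry fun x y => T.indicator (fun p => h p.1 * g p.2) (x, y))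
      (μ.prod μ) :=
    ((hh.comp measurable_fst).aemeasurable.mul hg.comp_snd).indicator hT
  calc ∫⁻ x, h x * ∫⁻ y in {y | 2 * ‖x‖ < ‖y‖}, g y ∂μ ∂μ
      = ∫⁻ x, ∫⁻ y, T.indicator (fun p => h p.1 * g p.2) (x, y) ∂μ ∂μ := by
        refine lintegral_congr fun x => ?_
        rw [← lintegral_indicator (hS x), ← lintegral_const_mul'' _ (hg.indicator (hS x))]
        simp only [hTx]
    _ = ∫⁻ y, ∫⁻ x, T.indicator (fun p => h p.1 * g p.2) (x, y) ∂μ ∂μ :=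
        lintegral_lintegral_swap hF
    _ = ∫⁻ y, g y * ∫⁻ x in ball 0 (‖y‖ / 2), h x ∂μ ∂μ := by
        refine lintegral_congr fun y => ?_
        rw [← lintegral_indicator measurableSet_ball,
          ← lintegral_const_mul _ (hh.indicator measurableSet_ball)]
        simp only [hTy]

theorem ofReal_rpow_setIntegral_two_norm_lt_le {d : ℝ} (hd : 1 ≤ d) {q : ℝ} (hq : 1 ≤ q)
    {f : E → ℝ} (hf : Integrable f μ) {x : E} (hx : x ≠ 0) :
    ENNReal.ofReal
        ((∫ y in {y | 2 * ‖x‖ < ‖y‖}, |f y| * ‖y‖ ^ (1 - d) ∂μ) ^ q *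
          ‖x‖ ^ (d * (q - 1) - q)) ≤
      ENNReal.ofReal (2 ^ ((1 - d) * (q - 1)) * (∫ y, |f y| ∂μ) ^ (q - 1)) *
        (ENNReal.ofReal (‖x‖ ^ (-1 : ℝ)) *
          ∫⁻ y in {y | 2 * ‖x‖ < ‖y‖}, ENNReal.ofReal (|f y| * ‖y‖ ^ (1 - d)) ∂μ) := by
  set A := ∫ y in {y | 2 * ‖x‖ < ‖y‖}, |f y| * ‖y‖ ^ (1 - d) ∂μ
  have hA : 0 ≤ A := integral_nonneg fun y => by positivity
  have hA_le : ENNReal.ofReal A ≤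
      ∫⁻ y in {y | 2 * ‖x‖ < ‖y‖}, ENNReal.ofReal (|f y| * ‖y‖ ^ (1 - d)) ∂μ := by
    rw [← Real.enorm_of_nonneg hA]
    refine (enorm_integral_le_lintegral_enorm _).trans_eq (lintegral_congr fun y => ?_)
    exact Real.enorm_of_nonneg (by positivity)
  set C := 2 ^ ((1 - d) * (q - 1)) * (∫ y, |f y| ∂μ) ^ (q - 1)
  have hC : 0 ≤ C := mul_nonneg (by positivity)
    (Real.rpow_nonneg (integral_nonneg fun y => abs_nonneg _) _)
  calc _ ≤ ENNReal.ofReal (C * (‖x‖ ^ (-1 : ℝ) * A)) :=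
        ENNReal.ofReal_le_ofReal <| rpow_mul_rpow_le_of_le hA (norm_pos_iff.2 hx) hq
          (setIntegral_two_norm_lt_le hf hd hx)
    _ = ENNReal.ofReal C * (ENNReal.ofReal (‖x‖ ^ (-1 : ℝ)) * ENNReal.ofReal A) := by
        rw [ENNReal.ofReal_mul hC, ENNReal.ofReal_mul (Real.rpow_nonneg (norm_nonneg x) _)]
    _ ≤ _ := by gcongr

end NormedGroup

section AddHaar

variable {E : Type*} [NormedAddCommGroup E] [NormedSpace ℝ E] [FiniteDimensional ℝ E]
  [MeasurableSpace E] [BorelSpace E] (μ : Measure E) [μ.IsAddHaarMeasure]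

theorem setIntegral_ball_norm_rpow_neg_one {r : ℝ} (hr : 0 < r) :
    ∫ x in ball (0 : E) r, ‖x‖ ^ (-1 : ℝ) ∂μ =
      r ^ ((finrank ℝ E : ℝ) - 1) * ∫ x in ball (0 : E) 1, ‖x‖ ^ (-1 : ℝ) ∂μ := by
  have h := Measure.setIntegral_comp_smul_of_pos μ (fun x : E => ‖x‖ ^ (-1 : ℝ)) (ball 0 1) hr
  simp only [norm_smul, Real.norm_of_nonneg hr.le, smul_unitBall_of_pos hr, smul_eq_mul,
    Real.mul_rpow hr.le (norm_nonneg _), integral_const_mul] at h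
  have hJ : ∫ x in ball (0 : E) r, ‖x‖ ^ (-1 : ℝ) ∂μ =
      r ^ finrank ℝ E * (r ^ (-1 : ℝ) * ∫ x in ball (0 : E) 1, ‖x‖ ^ (-1 : ℝ) ∂μ) := by
    rw [h]; field_simp
  rw [hJ, Real.rpow_sub_one hr.ne', Real.rpow_natCast, Real.rpow_neg_one]
  ring

theorem setLIntegral_ball_norm_rpow_neg_one_eq_ofReal (hd : 1 < finrank ℝ E) (r : ℝ) :
    ∫⁻ x in ball (0 : E) r, ENNReal.ofReal (‖x‖ ^ (-1 : ℝ)) ∂μ =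
      ENNReal.ofReal (∫ x in ball (0 : E) r, ‖x‖ ^ (-1 : ℝ) ∂μ) := by
  have hint : IntegrableOn (fun x : E => ‖x‖ ^ (-1 : ℝ)) (ball 0 r) μ := by
    refine integrableOn_ball_of_norm_le_rpow (C := 1) (α := 1) hd.le (by exact_mod_cast hd)
      (.of_forall fun x => ?_) (measurable_norm.pow_const _).aestronglyMeasurable
    rw [one_mul, Real.norm_of_nonneg (by positivity)]
  exact (ofReal_integral_eq_lintegral_ofReal hint (.of_forall fun x => by positivity)).symm

theorem lintegral_norm_rpow_neg_one_mul_setLIntegral_two_norm_lt (hd : 1 < finrank ℝ E)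
    {f : E → ℝ} (hf : Integrable f μ) :
    ∫⁻ x, ENNReal.ofReal (‖x‖ ^ (-1 : ℝ)) *
        ∫⁻ y in {y | 2 * ‖x‖ < ‖y‖}, ENNReal.ofReal (|f y| * ‖y‖ ^ (1 - (finrank ℝ E : ℝ))) ∂μ ∂μ =
      ENNReal.ofReal (2 ^ (1 - (finrank ℝ E : ℝ)) *
        (∫ x in ball (0 : E) 1, ‖x‖ ^ (-1 : ℝ) ∂μ) * ∫ y, |f y| ∂μ) := by
  have : Nontrivial E := Module.nontrivial_of_finrank_pos (R := ℝ) (by omega)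
  set d : ℝ := (finrank ℝ E : ℝ)
  set κ := ∫ x in ball (0 : E) 1, ‖x‖ ^ (-1 : ℝ) ∂μ
  have hκ : 0 ≤ κ := setIntegral_nonneg measurableSet_ball fun x _ => by positivity
  have hy (y : E) (hy : y ≠ 0) :
      ENNReal.ofReal (|f y| * ‖y‖ ^ (1 - d)) *
          ∫⁻ x in ball (0 : E) (‖y‖ / 2), ENNReal.ofReal (‖x‖ ^ (-1 : ℝ)) ∂μ =
        ENNReal.ofReal (2 ^ (1 - d) * κ) * ENNReal.ofReal |f y| := by
    have hy' : 0 < ‖y‖ := norm_pos_iff.2 hy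
    rw [setLIntegral_ball_norm_rpow_neg_one_eq_ofReal μ hd,
      setIntegral_ball_norm_rpow_neg_one μ (by positivity),
      ← ENNReal.ofReal_mul (by positivity), ← ENNReal.ofReal_mul (by positivity)]
    congr 1
    have h2 : ‖y‖ ^ (1 - d) * (‖y‖ / 2) ^ (d - 1) = 2 ^ (1 - d) := by
      rw [Real.div_rpow hy'.le zero_le_two, ← mul_div_assoc, ← Real.rpow_add hy', div_eq_mul_inv,
        ← Real.rpow_neg zero_le_two]
      ring_nf
      simp
    linear_combination (|f y| * κ) * h2
  rw [lintegral_mul_setLIntegral_two_norm_lt_swap (by fun_prop) (by fun_prop),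
    lintegral_congr_ae ((Measure.ae_ne μ 0).mono hy),
    lintegral_const_mul' _ _ ENNReal.ofReal_ne_top,
    ← ofReal_integral_eq_lintegral_ofReal hf.abs (.of_forall fun y => abs_nonneg _),
    ← ENNReal.ofReal_mul (by positivity)]

theorem lintegral_rpow_setIntegral_two_norm_lt_le (hd : 1 < finrank ℝ E) {q : ℝ} (hq : 1 ≤ q)
    {f : E → ℝ} (hf : Integrable f μ) :
    ∫⁻ x, ENNReal.ofReal
        ((∫ y in {y | 2 * ‖x‖ < ‖y‖}, |f y| * ‖y‖ ^ (1 - (finrank ℝ E : ℝ)) ∂μ) ^ q *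
          ‖x‖ ^ ((finrank ℝ E : ℝ) * (q - 1) - q)) ∂μ ≤
      ENNReal.ofReal (2 ^ ((1 - (finrank ℝ E : ℝ)) * q) *
        (∫ x in ball (0 : E) 1, ‖x‖ ^ (-1 : ℝ) ∂μ) * (∫ y, |f y| ∂μ) ^ q) := by
  have : Nontrivial E := Module.nontrivial_of_finrank_pos (R := ℝ) (by omega)
  set d : ℝ := (finrank ℝ E : ℝ)
  set I := ∫ y, |f y| ∂μ
  have hI : 0 ≤ I := integral_nonneg fun y => abs_nonneg _
  calc _ ≤ ∫⁻ x, ENNReal.ofReal (2 ^ ((1 - d) * (q - 1)) * I ^ (q - 1)) *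
          (ENNReal.ofReal (‖x‖ ^ (-1 : ℝ)) *
            ∫⁻ y in {y | 2 * ‖x‖ < ‖y‖}, ENNReal.ofReal (|f y| * ‖y‖ ^ (1 - d)) ∂μ) ∂μ :=
        lintegral_mono_ae ((Measure.ae_ne μ 0).mono fun x hx =>
          ofReal_rpow_setIntegral_two_norm_lt_le (Nat.one_le_cast.2 hd.le) hq hf hx)
    _ = ENNReal.ofReal (2 ^ ((1 - d) * (q - 1)) * I ^ (q - 1) *
          (2 ^ (1 - d) * (∫ x in ball (0 : E) 1, ‖x‖ ^ (-1 : ℝ) ∂μ) * I)) := by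
        rw [lintegral_const_mul' _ _ ENNReal.ofReal_ne_top,
          lintegral_norm_rpow_neg_one_mul_setLIntegral_two_norm_lt μ hd hf,
          ← ENNReal.ofReal_mul (by positivity)]
    _ = _ := by
        have h2 : (2 : ℝ) ^ ((1 - d) * (q - 1)) * 2 ^ (1 - d) = 2 ^ ((1 - d) * q) := by
          rw [← Real.rpow_add two_pos]; ring_nf
        have hIq : I ^ (q - 1) * I = I ^ q := by
          rw [← Real.rpow_add_one' hI (by linarith)]; ring_nf
        rw [← h2, ← hIq]
        congr 1
        ring

end AddHaar

theorem stmt_3_general (n : ℕ) (hn : 2 ≤ n) (q : ℝ) (hq1 : 1 ≤ q) :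
    ∃ c : ℝ, 0 < c ∧ ∀ f : EuclideanSpace ℝ (Fin n) → ℝ, Integrable f →
      (∫⁻ x : EuclideanSpace ℝ (Fin n), ENNReal.ofReal
          ((∫ y in {y : EuclideanSpace ℝ (Fin n) | 2 * ‖x‖ < ‖y‖},
              |f y| * ‖y‖ ^ ((1 : ℝ) - n)) ^ q * ‖x‖ ^ (n * (q - 1) - q))) ^ (1 / q) ≤
        ENNReal.ofReal (c * ∫ y, |f y|) := by
  have hdim : finrank ℝ (EuclideanSpace ℝ (Fin n)) = n := finrank_euclideanSpace_fin
  set C := 2 ^ ((1 - (n : ℝ)) * q) *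
    ∫ x in ball (0 : EuclideanSpace ℝ (Fin n)) 1, ‖x‖ ^ (-1 : ℝ)
  have hC : 0 ≤ C :=
    mul_nonneg (by positivity) (setIntegral_nonneg measurableSet_ball fun x _ => by positivity)
  have hq : 0 < q := by linarith
  refine ⟨C ^ (1 / q) + 1, by positivity, fun f hf => ?_⟩
  have hbound := lintegral_rpow_setIntegral_two_norm_lt_le volume (by omega) hq1 hf
  rw [hdim] at hbound
  have hI : 0 ≤ ∫ y, |f y| := integral_nonneg fun y => abs_nonneg _
  calc _ ≤ ENNReal.ofReal (C * (∫ y, |f y|) ^ q) ^ (1 / q) :=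
        ENNReal.rpow_le_rpow hbound (by positivity)
    _ = ENNReal.ofReal (C ^ (1 / q) * ∫ y, |f y|) := by
        rw [ENNReal.ofReal_rpow_of_nonneg (by positivity) (by positivity),
          Real.mul_rpow hC (by positivity), ← Real.rpow_mul hI, mul_one_div_cancel hq.ne',
          Real.rpow_one]
    _ ≤ _ := ENNReal.ofReal_le_ofReal (by gcongr; linarith)

/-- Weighted estimate for `A₃(x) = ∫_{|y|>2|x|} |f(y)| |y|^{1-n} dy`:
`(∫ A₃(x)^q |x|^{n(q-1)-q} dx)^{1/q} ≤ c(n,q) ‖f‖_{L¹}`. -/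
theorem stmt_3 (n : ℕ) (hn : 2 ≤ n) (q : ℝ) (hq1 : 1 ≤ q) (hq2 : q < n / (n - 1)) :
    ∃ c : ℝ, 0 < c ∧ ∀ f : EuclideanSpace ℝ (Fin n) → ℝ, Integrable f →
      (∫⁻ x : EuclideanSpace ℝ (Fin n), ENNReal.ofReal
          ((∫ y in {y : EuclideanSpace ℝ (Fin n) | 2 * ‖x‖ < ‖y‖},
              |f y| * ‖y‖ ^ ((1 : ℝ) - n)) ^ q * ‖x‖ ^ (n * (q - 1) - q))) ^ (1 / q) ≤
        ENNReal.ofReal (c * ∫ y, |f y|) :=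
  stmt_3_general n hn q hq1
end

section
/- For n ≥ 2, 1 ≤ q < n/(n-1), and f ∈ L^1(R^n), define A_1(x) = |x|^{-n} ∫_{|y| < |x|/2} |y| |f(y)| dy. Then (∫_{R^n} A_1(x)^q |x|^{n(q-1)-q} dx)^{1/q} ≤ c(n,q) ‖f‖_{L^1}. -/
/-!
Since `∫_{|y|<|x|/2} |y| |f y| dy ≤ (|x|/2) ‖f‖₁`, all but one factor of `A₁(x)^q` can be bounded
pointwise: `A₁(x)^q |x|^{n(q-1)-q} ≤ 2^{1-q} ‖f‖₁^{q-1} |x|^{-n-1} ∫_{|y|<|x|/2} |y| |f y| dy`.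
Integrating in `x` and exchanging the order of integration leaves `∫ |y| |f y| T(2|y|) dy`, where
`T(R) = ∫_{|x|>R} |x|^{-n-1} dx = T(1) / R` by scaling and `T(1) < ∞`. So the weight `|y|` cancels
and the integral is at most a multiple of `‖f‖₁^q`.
-/

open MeasureTheory Set ENNReal Module

theorem rpow_mul_rpow_le_of_le_half_mul {d q r I F : ℝ} (hq : 1 ≤ q) (hI : 0 ≤ I)
    (hIF : I ≤ r / 2 * F) (hF : 0 ≤ F) :
    (r ^ (-d) * I) ^ q * r ^ (d * (q - 1) - q) ≤
      2 ^ (1 - q) * F ^ (q - 1) * (r ^ (-d - 1) * I) := by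
  rcases hI.eq_or_lt with rfl | hI
  · simp [Real.zero_rpow (by linarith : q ≠ 0)]
  have hr : 0 < r := by
    by_contra! hr
    nlinarith [mul_nonpos_of_nonpos_of_nonneg hr hF]
  have hIq : I ^ q ≤ (r / 2 * F) ^ (q - 1) * I := by
    calc I ^ q = I ^ (q - 1) * I := by rw [Real.rpow_sub_one hI.ne', div_mul_cancel₀ _ hI.ne']
      _ ≤ (r / 2 * F) ^ (q - 1) * I := by gcongr
  calc (r ^ (-d) * I) ^ q * r ^ (d * (q - 1) - q)
      = r ^ (-d * q + (d * (q - 1) - q)) * I ^ q := by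
        rw [Real.mul_rpow (by positivity) hI.le, ← Real.rpow_mul hr.le, Real.rpow_add hr]; ring
    _ ≤ r ^ (-d * q + (d * (q - 1) - q)) * ((r / 2 * F) ^ (q - 1) * I) := by gcongr
    _ = 2 ^ (1 - q) * F ^ (q - 1) * (r ^ (-d - 1) * I) := by
        rw [Real.mul_rpow (by positivity) hF, Real.div_rpow hr.le zero_le_two,
          show (1 - q) = -(q - 1) by ring, Real.rpow_neg zero_le_two,
          show -d - 1 = -d * q + (d * (q - 1) - q) + (q - 1) by ring]
        field_simp
        rw [Real.rpow_add hr, Real.rpow_add hr, Real.rpow_add hr]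
        ring

section
variable {E : Type*} [NormedAddCommGroup E] [MeasurableSpace E] [OpensMeasurableSpace E]
  (μ : Measure E)

theorem integrableOn_norm_mul_abs_norm_lt {f : E → ℝ} (hf : Integrable f μ) (r : ℝ) :
    IntegrableOn (fun y ↦ ‖y‖ * |f y|) {y : E | ‖y‖ < r} μ := by
  refine hf.abs.restrict.bdd_mul (c := r) (by fun_prop) ?_
  filter_upwards [ae_restrict_mem (measurableSet_lt measurable_norm measurable_const)] with y hy
  rw [norm_norm]
  exact hy.le

theorem setIntegral_norm_lt_norm_mul_abs_le {f : E → ℝ} (hf : Integrable f μ) {r : ℝ} (hr : 0 ≤ r) :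
    ∫ y in {y : E | ‖y‖ < r}, ‖y‖ * |f y| ∂μ ≤ r * ∫ y, |f y| ∂μ := by
  have hS : MeasurableSet {y : E | ‖y‖ < r} := measurableSet_lt measurable_norm measurable_const
  calc ∫ y in {y : E | ‖y‖ < r}, ‖y‖ * |f y| ∂μ ≤ ∫ y in {y : E | ‖y‖ < r}, r * |f y| ∂μ :=
        setIntegral_mono_on (integrableOn_norm_mul_abs_norm_lt μ hf r)
          (hf.abs.restrict.const_mul r) hS fun y hy ↦ by gcongr; exact hy.out.le
    _ = r * ∫ y in {y : E | ‖y‖ < r}, |f y| ∂μ := integral_const_mul r _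
    _ ≤ r * ∫ y, |f y| ∂μ := mul_le_mul_of_nonneg_left
        (setIntegral_le_integral hf.abs (.of_forall fun y ↦ abs_nonneg _)) hr

end

section
variable {E : Type*} [NormedAddCommGroup E] [NormedSpace ℝ E] [FiniteDimensional ℝ E]
  [MeasurableSpace E] [BorelSpace E] (μ : Measure E) [μ.IsAddHaarMeasure]

theorem setLIntegral_lt_norm_rpow {s R : ℝ} (hR : 0 < R) :
    ∫⁻ x in {x : E | R < ‖x‖}, ENNReal.ofReal (‖x‖ ^ s) ∂μ =
      ENNReal.ofReal (R ^ (s + finrank ℝ E)) *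
        ∫⁻ x in {x : E | 1 < ‖x‖}, ENNReal.ofReal (‖x‖ ^ s) ∂μ := by
  set φ : E → ℝ≥0∞ := {x : E | 1 < ‖x‖}.indicator fun x ↦ ENNReal.ofReal (‖x‖ ^ s)
  have hφ : Measurable φ :=
    (Measurable.ennreal_ofReal (by fun_prop)).indicator
      (measurableSet_lt measurable_const measurable_norm)
  have h_scale : ∀ x : E, {x : E | R < ‖x‖}.indicator (fun x ↦ ENNReal.ofReal (‖x‖ ^ s)) x =
      ENNReal.ofReal (R ^ s) * φ (R⁻¹ • x) := by
    intro x
    have hx : ‖R⁻¹ • x‖ = R⁻¹ * ‖x‖ := by rw [norm_smul, Real.norm_of_nonneg (by positivity)]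
    by_cases h : R < ‖x‖
    · have h' : 1 < ‖R⁻¹ • x‖ := by rw [hx, inv_mul_eq_div, one_lt_div hR]; exact h
      simp only [φ, indicator_apply, mem_ofPred_eq, h, h', if_true]
      rw [← ENNReal.ofReal_mul (by positivity), hx,
        Real.mul_rpow (by positivity) (by positivity), Real.inv_rpow hR.le, mul_inv_cancel_left₀
          (Real.rpow_pos_of_pos hR s).ne']
    · have h' : ¬ 1 < ‖R⁻¹ • x‖ := by rw [hx, inv_mul_eq_div, one_lt_div hR]; exact h
      simp only [φ, indicator_apply, mem_ofPred_eq, h, h', if_false, mul_zero]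
  have h_map : ∫⁻ x, φ (R⁻¹ • x) ∂μ = ENNReal.ofReal (R ^ finrank ℝ E) * ∫⁻ x, φ x ∂μ := by
    rw [← lintegral_map hφ (measurable_const_smul _), Measure.map_addHaar_smul μ (by positivity),
      lintegral_smul_measure, inv_pow, inv_inv, abs_of_pos (by positivity), smul_eq_mul]
  rw [← lintegral_indicator (measurableSet_lt measurable_const measurable_norm),
    ← lintegral_indicator (measurableSet_lt measurable_const measurable_norm)]
  simp_rw [h_scale]
  rw [lintegral_const_mul' _ _ ofReal_ne_top, h_map, ← mul_assoc,
    ← ENNReal.ofReal_mul (by positivity), ← Real.rpow_natCast, ← Real.rpow_add hR]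

theorem setLIntegral_one_lt_norm_rpow_lt_top {s : ℝ} (hs : s < -finrank ℝ E) :
    ∫⁻ x in {x : E | 1 < ‖x‖}, ENNReal.ofReal (‖x‖ ^ s) ∂μ < ∞ := by
  have hs0 : s ≤ 0 := hs.le.trans (neg_nonpos.2 (Nat.cast_nonneg _))
  have h_le : ∀ x ∈ {x : E | 1 < ‖x‖},
      ENNReal.ofReal (‖x‖ ^ s) ≤ ENNReal.ofReal (2 ^ (-s)) * ENNReal.ofReal ((1 + ‖x‖) ^ s) := by
    intro x hx
    rw [← ENNReal.ofReal_mul (by positivity)]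
    refine ENNReal.ofReal_le_ofReal ?_
    calc ‖x‖ ^ s = 2 ^ (-s) * (2 * ‖x‖) ^ s := by
          rw [Real.mul_rpow zero_le_two (norm_nonneg x), ← mul_assoc, ← Real.rpow_add two_pos,
            neg_add_cancel, Real.rpow_zero, one_mul]
      _ ≤ 2 ^ (-s) * (1 + ‖x‖) ^ s := by
          gcongr 2 ^ (-s) * ?_
          exact Real.rpow_le_rpow_of_nonpos (by positivity) (by linarith [hx.out]) hs0
  calc ∫⁻ x in {x : E | 1 < ‖x‖}, ENNReal.ofReal (‖x‖ ^ s) ∂μ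
      ≤ ∫⁻ x in {x : E | 1 < ‖x‖}, ENNReal.ofReal (2 ^ (-s)) * ENNReal.ofReal ((1 + ‖x‖) ^ s) ∂μ :=
        setLIntegral_mono' (measurableSet_lt measurable_const measurable_norm) h_le
    _ ≤ ∫⁻ x, ENNReal.ofReal (2 ^ (-s)) * ENNReal.ofReal ((1 + ‖x‖) ^ s) ∂μ :=
        setLIntegral_le_lintegral _ _
    _ = ENNReal.ofReal (2 ^ (-s)) * ∫⁻ x, ENNReal.ofReal ((1 + ‖x‖) ^ (-(-s))) ∂μ := by
        rw [lintegral_const_mul' _ _ ofReal_ne_top, neg_neg]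
    _ < ∞ := mul_lt_top ofReal_lt_top (finite_integral_one_add_norm (by linarith))

theorem lintegral_rpow_mul_setLIntegral_norm_lt_half_le {g : E → ℝ≥0∞} (hg : AEMeasurable g μ) :
    ∫⁻ x, ENNReal.ofReal (‖x‖ ^ (-(finrank ℝ E : ℝ) - 1)) *
        ∫⁻ y in {y : E | ‖y‖ < ‖x‖ / 2}, ENNReal.ofReal ‖y‖ * g y ∂μ ∂μ ≤
      (∫⁻ x in {x : E | 1 < ‖x‖}, ENNReal.ofReal (‖x‖ ^ (-(finrank ℝ E : ℝ) - 1)) ∂μ) *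
        ∫⁻ y, g y ∂μ := by
  set s : ℝ := -(finrank ℝ E : ℝ) - 1
  set K : E → E → ℝ≥0∞ := fun x y ↦ {p : E × E | 2 * ‖p.2‖ < ‖p.1‖}.indicator
    (fun p ↦ ENNReal.ofReal (‖p.1‖ ^ s) * (ENNReal.ofReal ‖p.2‖ * g p.2)) (x, y)
  have hK : AEMeasurable (Function.uncurry K) (μ.prod μ) :=
    ((Measurable.ennreal_ofReal (by fun_prop)).aemeasurable.mul
        ((Measurable.ennreal_ofReal (by fun_prop)).aemeasurable.mul hg.comp_snd)).indicator
      (measurableSet_lt (by fun_prop) (by fun_prop))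
  have h_inner : ∀ x : E, ENNReal.ofReal (‖x‖ ^ s) *
      ∫⁻ y in {y : E | ‖y‖ < ‖x‖ / 2}, ENNReal.ofReal ‖y‖ * g y ∂μ = ∫⁻ y, K x y ∂μ := by
    intro x
    rw [← lintegral_const_mul' _ _ ofReal_ne_top, ← lintegral_indicator
      (measurableSet_lt measurable_norm measurable_const)]
    refine lintegral_congr fun y ↦ ?_
    simp only [K, indicator_apply, mem_ofPred_eq, lt_div_iff₀' (two_pos : (0 : ℝ) < 2)]
  have h_outer : ∀ y : E, ∫⁻ x, K x y ∂μ ≤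
      (∫⁻ x in {x : E | 1 < ‖x‖}, ENNReal.ofReal (‖x‖ ^ s) ∂μ) * g y := by
    intro y
    have h_K : ∫⁻ x, K x y ∂μ = (∫⁻ x in {x : E | 2 * ‖y‖ < ‖x‖}, ENNReal.ofReal (‖x‖ ^ s) ∂μ) *
        (ENNReal.ofReal ‖y‖ * g y) := by
      rw [← lintegral_mul_const _ (by fun_prop), ← lintegral_indicator
        (measurableSet_lt measurable_const measurable_norm)]
      simp only [K, indicator_apply, mem_ofPred_eq]
    rcases (norm_nonneg y).eq_or_lt with hy | hy
    · simp [h_K, ← hy]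
    set T := ∫⁻ x in {x : E | 1 < ‖x‖}, ENNReal.ofReal (‖x‖ ^ s) ∂μ
    have hs : s + finrank ℝ E = -1 := by ring
    calc ∫⁻ x, K x y ∂μ
        = ENNReal.ofReal (‖y‖ * (2 * ‖y‖) ^ (-1 : ℝ)) * (T * g y) := by
          rw [h_K, setLIntegral_lt_norm_rpow μ (by positivity), hs, ENNReal.ofReal_mul hy.le]
          ring
      _ = ENNReal.ofReal 2⁻¹ * (T * g y) := by
          congr 2
          rw [Real.rpow_neg_one]
          field_simp
      _ ≤ T * g y := mul_le_of_le_one_left' (ofReal_le_one.2 (by norm_num))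
  calc _ = ∫⁻ x, ∫⁻ y, K x y ∂μ ∂μ := lintegral_congr h_inner
    _ = ∫⁻ y, ∫⁻ x, K x y ∂μ ∂μ := lintegral_lintegral_swap hK
    _ ≤ _ := by
      rw [← lintegral_const_mul' _ _ (setLIntegral_one_lt_norm_rpow_lt_top μ (by linarith)).ne]
      exact lintegral_mono h_outer

/-- The paper's `A₁ f`. -/
noncomputable def smallBallMomentAverage (f : E → ℝ) (x : E) : ℝ :=
  ‖x‖ ^ (-(finrank ℝ E : ℝ)) * ∫ y in {y : E | ‖y‖ < ‖x‖ / 2}, ‖y‖ * |f y| ∂μ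

theorem lintegral_smallBallMomentAverage_rpow_le {q : ℝ} (hq : 1 ≤ q) {f : E → ℝ}
    (hf : Integrable f μ) :
    ∫⁻ x, ENNReal.ofReal (smallBallMomentAverage μ f x ^ q *
      ‖x‖ ^ ((finrank ℝ E : ℝ) * (q - 1) - q)) ∂μ ≤
      ENNReal.ofReal (2 ^ (1 - q) * (∫ y, |f y| ∂μ) ^ q) *
        ∫⁻ x in {x : E | 1 < ‖x‖}, ENNReal.ofReal (‖x‖ ^ (-(finrank ℝ E : ℝ) - 1)) ∂μ := by
  set F := ∫ y, |f y| ∂μ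
  have hF : 0 ≤ F := integral_nonneg fun y ↦ abs_nonneg _
  have h_moment : ∀ x : E, ENNReal.ofReal (∫ y in {y : E | ‖y‖ < ‖x‖ / 2}, ‖y‖ * |f y| ∂μ) =
      ∫⁻ y in {y : E | ‖y‖ < ‖x‖ / 2}, ENNReal.ofReal ‖y‖ * ENNReal.ofReal |f y| ∂μ := by
    intro x
    simp_rw [← ENNReal.ofReal_mul (norm_nonneg _)]
    exact ofReal_integral_eq_lintegral_ofReal (integrableOn_norm_mul_abs_norm_lt μ hf _)
      (.of_forall fun y ↦ by positivity)
  have h_pointwise : ∀ x : E, ENNReal.ofReal (smallBallMomentAverage μ f x ^ q *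
      ‖x‖ ^ ((finrank ℝ E : ℝ) * (q - 1) - q)) ≤
      ENNReal.ofReal (2 ^ (1 - q) * F ^ (q - 1)) *
        (ENNReal.ofReal (‖x‖ ^ (-(finrank ℝ E : ℝ) - 1)) *
          ∫⁻ y in {y : E | ‖y‖ < ‖x‖ / 2}, ENNReal.ofReal ‖y‖ * ENNReal.ofReal |f y| ∂μ) := by
    intro x
    rw [smallBallMomentAverage, ← h_moment, ← ENNReal.ofReal_mul (by positivity),
      ← ENNReal.ofReal_mul (by positivity)]
    refine ENNReal.ofReal_le_ofReal (rpow_mul_rpow_le_of_le_half_mul hq ?_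
      (setIntegral_norm_lt_norm_mul_abs_le μ hf (by positivity)) hF)
    exact setIntegral_nonneg (measurableSet_lt measurable_norm measurable_const)
      fun y _ ↦ by positivity
  calc _ ≤ ∫⁻ x, ENNReal.ofReal (2 ^ (1 - q) * F ^ (q - 1)) *
        (ENNReal.ofReal (‖x‖ ^ (-(finrank ℝ E : ℝ) - 1)) *
          ∫⁻ y in {y : E | ‖y‖ < ‖x‖ / 2}, ENNReal.ofReal ‖y‖ * ENNReal.ofReal |f y| ∂μ) ∂μ :=
        lintegral_mono h_pointwise
    _ ≤ ENNReal.ofReal (2 ^ (1 - q) * F ^ (q - 1)) *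
        ((∫⁻ x in {x : E | 1 < ‖x‖}, ENNReal.ofReal (‖x‖ ^ (-(finrank ℝ E : ℝ) - 1)) ∂μ) *
          ∫⁻ y, ENNReal.ofReal |f y| ∂μ) := by
        rw [lintegral_const_mul' _ _ ofReal_ne_top]
        gcongr
        exact lintegral_rpow_mul_setLIntegral_norm_lt_half_le μ hf.1.aemeasurable.abs.ennreal_ofReal
    _ = _ := by
        rw [← ofReal_integral_eq_lintegral_ofReal hf.abs (.of_forall fun y ↦ abs_nonneg _),
          show (2 : ℝ) ^ (1 - q) * F ^ q = 2 ^ (1 - q) * F ^ (q - 1) * F by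
            rw [mul_assoc, ← Real.rpow_add_one' hF (by linarith), sub_add_cancel],
          ENNReal.ofReal_mul (q := F) (by positivity)]
        ring

end

theorem stmt_4_general (n : ℕ) (q : ℝ) (hq1 : 1 ≤ q) :
    ∃ c : ℝ, 0 < c ∧ ∀ f : EuclideanSpace ℝ (Fin n) → ℝ, Integrable f →
      (∫⁻ x : EuclideanSpace ℝ (Fin n), ENNReal.ofReal
          ((‖x‖ ^ (-(n : ℝ)) * ∫ y in {y : EuclideanSpace ℝ (Fin n) | ‖y‖ < ‖x‖ / 2},
              ‖y‖ * |f y|) ^ q * ‖x‖ ^ (n * (q - 1) - q))) ^ (1 / q) ≤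
        ENNReal.ofReal (c * ∫ y, |f y|) := by
  set T := ∫⁻ x in {x : EuclideanSpace ℝ (Fin n) | 1 < ‖x‖}, ENNReal.ofReal (‖x‖ ^ (-(n : ℝ) - 1))
  have hT : T ≠ ∞ := by
    have := setLIntegral_one_lt_norm_rpow_lt_top (volume : Measure (EuclideanSpace ℝ (Fin n)))
      (s := -(n : ℝ) - 1)
    rw [finrank_euclideanSpace_fin] at this
    exact (this (by linarith)).ne
  refine ⟨(2 ^ (1 - q) * T.toReal) ^ (1 / q) + 1, by positivity, fun f hf ↦ ?_⟩
  have hF : 0 ≤ ∫ y, |f y| := integral_nonneg fun y ↦ abs_nonneg _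
  have h := lintegral_smallBallMomentAverage_rpow_le volume hq1 hf
  simp only [smallBallMomentAverage, finrank_euclideanSpace_fin] at h
  change _ ≤ _ * T at h
  rw [← ofReal_toReal hT, ← ENNReal.ofReal_mul (by positivity)] at h
  calc _ ≤ ENNReal.ofReal (2 ^ (1 - q) * (∫ y, |f y|) ^ q * T.toReal) ^ (1 / q) := by gcongr
    _ = ENNReal.ofReal ((2 ^ (1 - q) * T.toReal) ^ (1 / q) * ∫ y, |f y|) := by
        rw [ofReal_rpow_of_nonneg (by positivity) (by positivity), mul_right_comm,
          Real.mul_rpow (by positivity) (by positivity), one_div,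
          Real.rpow_rpow_inv hF (by linarith)]
    _ ≤ ENNReal.ofReal (((2 ^ (1 - q) * T.toReal) ^ (1 / q) + 1) * ∫ y, |f y|) := by
        gcongr
        linarith

/-- Weighted estimate for `A₁(x) = |x|^{-n} ∫_{|y|<|x|/2} |y| |f(y)| dy`:
`(∫ A₁(x)^q |x|^{n(q-1)-q} dx)^{1/q} ≤ c(n,q) ‖f‖_{L¹}`. -/
theorem stmt_4 (n : ℕ) (hn : 2 ≤ n) (q : ℝ) (hq1 : 1 ≤ q) (hq2 : q < n / (n - 1)) :
    ∃ c : ℝ, 0 < c ∧ ∀ f : EuclideanSpace ℝ (Fin n) → ℝ, Integrable f →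
      (∫⁻ x : EuclideanSpace ℝ (Fin n), ENNReal.ofReal
          ((‖x‖ ^ (-(n : ℝ)) * ∫ y in {y : EuclideanSpace ℝ (Fin n) | ‖y‖ < ‖x‖ / 2},
              ‖y‖ * |f y|) ^ q * ‖x‖ ^ (n * (q - 1) - q))) ^ (1 / q) ≤
        ENNReal.ofReal (c * ∫ y, |f y|) :=
  stmt_4_general n q hq1
end
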